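/- arXiv:2309.08740 — 5 statements merged into one kernel-verified Lean document; each statement's English description precedes it below -/
import Mathlib

section
/- Let Σ* be an N×N symmetric positive definite matrix with blocks A, B, C, D, C = B^T, and Δ as above (last N−M coordinates equal C A^{-1} Δ̃). Then 1_N^T Σ*^{-1} Δ = 1_M^T A^{-1} Δ̃. -/
open Matrix

namespace Matrix

variable {k l m n α : Type*}

theorem PosDef.toBlocks₁₁ [Ring α] [PartialOrder α] [StarRing α] {S : Matrix (m ⊕ n) (m ⊕ n) α}
    (hS : S.PosDef) : S.toBlocks₁₁.PosDef :=
  hS.submatrix Sum.inl_injective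

theorem mulVec_sum_elim_zero [Fintype m] [Fintype n] [NonUnitalNonAssocSemiring α]
    (S : Matrix (k ⊕ l) (m ⊕ n) α) (x : m → α) :
    S *ᵥ Sum.elim x 0 = Sum.elim (S.toBlocks₁₁ *ᵥ x) (S.toBlocks₂₁ *ᵥ x) := by
  conv_lhs => rw [← S.fromBlocks_toBlocks, fromBlocks_mulVec]
  simp

/-- `(x, C A⁻¹ x)` is the image under `S` of `(A⁻¹ x, 0)`. -/
theorem inv_mulVec_sum_elim_toBlocks₂₁_mul_inv [Fintype m] [Fintype n] [DecidableEq m]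
    [DecidableEq n] [CommRing α] (S : Matrix (m ⊕ n) (m ⊕ n) α) (hS : IsUnit S.det)
    (hA : IsUnit S.toBlocks₁₁.det) (x : m → α) :
    S⁻¹ *ᵥ Sum.elim x ((S.toBlocks₂₁ * S.toBlocks₁₁⁻¹) *ᵥ x) =
      Sum.elim (S.toBlocks₁₁⁻¹ *ᵥ x) 0 := by
  have hSx : S *ᵥ Sum.elim (S.toBlocks₁₁⁻¹ *ᵥ x) 0 =
      Sum.elim x ((S.toBlocks₂₁ * S.toBlocks₁₁⁻¹) *ᵥ x) := by
    rw [mulVec_sum_elim_zero, mulVec_mulVec, mul_nonsing_inv _ hA, one_mulVec, mulVec_mulVec]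
  rw [← hSx, mulVec_mulVec, nonsing_inv_mul _ hS, one_mulVec]

end Matrix

/-- For symmetric positive definite `Σ*` with blocks `A, B, C, D` and
`Δ = (Δ̃, C A⁻¹ Δ̃)`, one has `1_Nᵀ Σ*⁻¹ Δ = 1_Mᵀ A⁻¹ Δ̃`. -/
theorem ones_dot_inv_mulVec_constrained {M L : ℕ}
    (S : Matrix (Fin M ⊕ Fin L) (Fin M ⊕ Fin L) ℝ) (hS : S.PosDef) (Δt : Fin M → ℝ) :
    (fun _ => (1 : ℝ)) ⬝ᵥ
        (S⁻¹ *ᵥ (Sum.elim Δt ((S.toBlocks₂₁ * (S.toBlocks₁₁)⁻¹) *ᵥ Δt))) =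
      (fun _ => (1 : ℝ)) ⬝ᵥ ((S.toBlocks₁₁)⁻¹ *ᵥ Δt) := by
  have hSdet : IsUnit S.det := (isUnit_iff_isUnit_det S).mp hS.isUnit
  have hAdet : IsUnit S.toBlocks₁₁.det := (isUnit_iff_isUnit_det _).mp hS.toBlocks₁₁.isUnit
  rw [inv_mulVec_sum_elim_toBlocks₂₁_mul_inv S hSdet hAdet]
  simp [dotProduct, Fintype.sum_sum_type]
end

section
/- Let v ∈ R^N with all entries positive, ν_i = 1/v_i, and Σ* = diag(v) + 1_N 1_N^T. Fix 1 ≤ M < N and Δ_1,...,Δ_M ∈ R. Let Δ̄ = (Σ_{i=1}^M ν_i Δ_i)/(1 + Σ_{i=1}^M ν_i). Then the minimizer Δ of Δ^T Σ*^{-1} Δ over vectors whose first M coordinates are Δ_1,...,Δ_M has Δ_j = Δ̄ for all j = M+1,...,N, and 1_N^T Σ*^{-1} Δ = Δ̄. -/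
/-!
Over the affine set of vectors with prescribed familiar coordinates, `Δ` minimizes the positive
definite form `Δᵀ Σ*⁻¹ Δ` as soon as `Σ*⁻¹ Δ` is orthogonal to every feasible direction, i.e.
`Δ = Σ* w` with `w` supported on the familiar sources, and such a minimizer is unique. Since
`Σ* w = v ∘ w + (∑ w) 1`, the unfamiliar coordinates of `Σ* w` all equal `m = ∑ w`, and matching
the familiar ones forces `w_i = ν_i (Δ_i - m)`; the consistency condition `m = ∑ ν_i (Δ_i - m)`
is solved by `m = Δ̄`. Finally `1ᵀ Σ*⁻¹ Δ = ∑ w = Δ̄`.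
-/

open Matrix

namespace Matrix

variable {n : Type*} [Fintype n]

section QuadraticForm

variable {R : Type*} [CommRing R] [StarRing R] [TrivialStar R] {A : Matrix n n R}

theorem IsHermitian.dotProduct_mulVec_comm (hA : A.IsHermitian) (x y : n → R) :
    x ⬝ᵥ (A *ᵥ y) = y ⬝ᵥ (A *ᵥ x) := by
  rw [dotProduct_mulVec, ← mulVec_transpose, (isHermitian_iff_isSymm.1 hA).eq, dotProduct_comm]

theorem IsHermitian.dotProduct_mulVec_add (hA : A.IsHermitian) (x y : n → R) :
    (x + y) ⬝ᵥ (A *ᵥ (x + y)) =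
      x ⬝ᵥ (A *ᵥ x) + 2 * (y ⬝ᵥ (A *ᵥ x)) + y ⬝ᵥ (A *ᵥ y) := by
  simp only [mulVec_add, add_dotProduct, dotProduct_add, hA.dotProduct_mulVec_comm x y]
  ring

theorem PosDef.dotProduct_mulVec_add_of_orthogonal [LinearOrder R] [IsStrictOrderedRing R]
    (hA : A.PosDef) {x y : n → R} (h : y ⬝ᵥ (A *ᵥ x) = 0) (hy : y ≠ 0) :
    x ⬝ᵥ (A *ᵥ x) < (x + y) ⬝ᵥ (A *ᵥ (x + y)) := by
  have hy_pos : 0 < y ⬝ᵥ (A *ᵥ y) := by simpa using hA.dotProduct_mulVec_pos hy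
  rw [hA.isHermitian.dotProduct_mulVec_add, h]
  linarith

theorem PosDef.unique_minimizer_of_orthogonal [LinearOrder R] [IsStrictOrderedRing R]
    (hA : A.PosDef) {C : Set (n → R)} {x : n → R} (hx : x ∈ C) (horth : ∀ z ∈ C, (z - x) ⬝ᵥ (A *ᵥ x) = 0) :
    (∀ z ∈ C, x ⬝ᵥ (A *ᵥ x) ≤ z ⬝ᵥ (A *ᵥ z)) ∧
      ∀ z ∈ C, (∀ z' ∈ C, z ⬝ᵥ (A *ᵥ z) ≤ z' ⬝ᵥ (A *ᵥ z')) → z = x := by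
  have hlt : ∀ z ∈ C, z ≠ x → x ⬝ᵥ (A *ᵥ x) < z ⬝ᵥ (A *ᵥ z) := fun z hz hne => by
    simpa using hA.dotProduct_mulVec_add_of_orthogonal (horth z hz) (sub_ne_zero.2 hne)
  refine ⟨fun z hz => ?_, fun z hz hmin => ?_⟩
  · rcases eq_or_ne z x with rfl | hne
    · rfl
    · exact (hlt z hz hne).le
  · by_contra hne
    exact (hmin x hx).not_gt (hlt z hz hne)

end QuadraticForm

theorem posDef_diagonal_add_allOnes [DecidableEq n] {v : n → ℝ} (hv : ∀ i, 0 < v i) :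
    (diagonal v + of fun _ _ => (1 : ℝ)).PosDef := by
  have hones : (of fun _ _ => (1 : ℝ) : Matrix n n ℝ) = vecMulVec 1 (star 1) := by
    ext; simp [vecMulVec]
  rw [hones]
  exact (PosDef.diagonal hv).add_posSemidef (posSemidef_vecMulVec_self_star 1)

theorem of_const_one_mulVec {m α : Type*} [NonAssocSemiring α] (w : n → α) :
    (of fun (_ : m) (_ : n) => (1 : α)) *ᵥ w = fun _ => ∑ j, w j := by
  ext; simp [mulVec, dotProduct]

theorem diagonal_add_allOnes_mulVec_sumElim {ι κ : Type*} [Fintype ι] [Fintype κ]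
    [DecidableEq ι] [DecidableEq κ] {v : ι ⊕ κ → ℝ} (hv : ∀ i, v (.inl i) ≠ 0)
    {a : ι → ℝ} {m : ℝ} (hm : ∑ i, (v (.inl i))⁻¹ * (a i - m) = m) :
    (diagonal v + of fun _ _ => (1 : ℝ)) *ᵥ Sum.elim (fun i => (v (.inl i))⁻¹ * (a i - m)) 0 =
      Sum.elim a fun _ => m := by
  ext (i | j) <;>
    simp [add_mulVec, mulVec_diagonal, of_const_one_mulVec, Fintype.sum_sum_type, hm, hv]

end Matrix

theorem sum_mul_sub_div_one_add_sum_eq {ι : Type*} [Fintype ι] {ν a : ι → ℝ}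
    (hν : 1 + ∑ i, ν i ≠ 0) :
    ∑ i, ν i * (a i - (∑ j, ν j * a j) / (1 + ∑ j, ν j)) = (∑ j, ν j * a j) / (1 + ∑ j, ν j) := by
  simp only [mul_sub, Finset.sum_sub_distrib, ← Finset.sum_mul]
  field_simp
  ring

theorem baseline_characterization_general {M L : ℕ}
    (v : Fin M ⊕ Fin L → ℝ) (hv : ∀ i, 0 < v i) (Δt : Fin M → ℝ) :
    let S : Matrix (Fin M ⊕ Fin L) (Fin M ⊕ Fin L) ℝ :=
      Matrix.diagonal v + Matrix.of (fun _ _ => (1 : ℝ))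
    let Δbar : ℝ :=
      (∑ i, (v (Sum.inl i))⁻¹ * Δt i) / (1 + ∑ i, (v (Sum.inl i))⁻¹)
    (∃ Δ : Fin M ⊕ Fin L → ℝ,
      (∀ i, Δ (Sum.inl i) = Δt i) ∧
      (∀ Δ' : Fin M ⊕ Fin L → ℝ, (∀ i, Δ' (Sum.inl i) = Δt i) →
        Δ ⬝ᵥ (S⁻¹ *ᵥ Δ) ≤ Δ' ⬝ᵥ (S⁻¹ *ᵥ Δ'))) ∧
    (∀ Δ : Fin M ⊕ Fin L → ℝ,
      (∀ i, Δ (Sum.inl i) = Δt i) →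
      (∀ Δ' : Fin M ⊕ Fin L → ℝ, (∀ i, Δ' (Sum.inl i) = Δt i) →
        Δ ⬝ᵥ (S⁻¹ *ᵥ Δ) ≤ Δ' ⬝ᵥ (S⁻¹ *ᵥ Δ')) →
      (∀ j, Δ (Sum.inr j) = Δbar) ∧
      (fun _ => (1 : ℝ)) ⬝ᵥ (S⁻¹ *ᵥ Δ) = Δbar) := by
  intro S Δbar
  have hS : S.PosDef := posDef_diagonal_add_allOnes hv
  have hΔbar : ∑ i, (v (.inl i))⁻¹ * (Δt i - Δbar) = Δbar := sum_mul_sub_div_one_add_sum_eq <|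
    (add_pos_of_pos_of_nonneg one_pos (Finset.sum_nonneg fun i _ => (inv_pos.2 (hv _)).le)).ne'
  set w : Fin M ⊕ Fin L → ℝ := Sum.elim (fun i => (v (.inl i))⁻¹ * (Δt i - Δbar)) 0 with hw
  set Δs : Fin M ⊕ Fin L → ℝ := Sum.elim Δt fun _ => Δbar
  have hSw : S *ᵥ w = Δs := diagonal_add_allOnes_mulVec_sumElim (fun _ => (hv _).ne') hΔbar
  have hSinv : S⁻¹ *ᵥ Δs = w := by
    rw [← hSw, mulVec_mulVec,
      nonsing_inv_mul _ ((isUnit_iff_isUnit_det S).1 hS.isUnit), one_mulVec]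
  set C : Set (Fin M ⊕ Fin L → ℝ) := {z | ∀ i, z (Sum.inl i) = Δt i}
  have hΔs : Δs ∈ C := fun _ => rfl
  have horth : ∀ z ∈ C, (z - Δs) ⬝ᵥ (S⁻¹ *ᵥ Δs) = 0 := by
    intro z hz
    rw [hSinv]
    simp [Δs, hw, hz.out, dotProduct, Fintype.sum_sum_type]
  obtain ⟨hmin, huniq⟩ := hS.inv.unique_minimizer_of_orthogonal hΔs horth
  refine ⟨⟨Δs, fun _ => rfl, hmin⟩, fun Δ hΔ hΔmin => ?_⟩
  obtain rfl := huniq Δ hΔ hΔmin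
  refine ⟨fun _ => rfl, ?_⟩
  simp [hSinv, hw, dotProduct, Fintype.sum_sum_type, hΔbar]

/-- Baseline characterization (Theorem 1(i)): for `Σ* = diag(v) + 1 1ᵀ`, the minimizer of
`Δᵀ Σ*⁻¹ Δ` over vectors with fixed first `M` coordinates `Δ_1, …, Δ_M` has all remaining
coordinates equal to `Δ̄ = (Σ ν_i Δ_i)/(1 + Σ ν_i)`, and `1ᵀ Σ*⁻¹ Δ = Δ̄`. -/
theorem baseline_characterization {M L : ℕ} (hM : 0 < M) (hL : 0 < L)
    (v : Fin M ⊕ Fin L → ℝ) (hv : ∀ i, 0 < v i) (Δt : Fin M → ℝ) :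
    let S : Matrix (Fin M ⊕ Fin L) (Fin M ⊕ Fin L) ℝ :=
      Matrix.diagonal v + Matrix.of (fun _ _ => (1 : ℝ))
    let Δbar : ℝ :=
      (∑ i, (v (Sum.inl i))⁻¹ * Δt i) / (1 + ∑ i, (v (Sum.inl i))⁻¹)
    (∃ Δ : Fin M ⊕ Fin L → ℝ,
      (∀ i, Δ (Sum.inl i) = Δt i) ∧
      (∀ Δ' : Fin M ⊕ Fin L → ℝ, (∀ i, Δ' (Sum.inl i) = Δt i) →
        Δ ⬝ᵥ (S⁻¹ *ᵥ Δ) ≤ Δ' ⬝ᵥ (S⁻¹ *ᵥ Δ'))) ∧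
    (∀ Δ : Fin M ⊕ Fin L → ℝ,
      (∀ i, Δ (Sum.inl i) = Δt i) →
      (∀ Δ' : Fin M ⊕ Fin L → ℝ, (∀ i, Δ' (Sum.inl i) = Δt i) →
        Δ ⬝ᵥ (S⁻¹ *ᵥ Δ) ≤ Δ' ⬝ᵥ (S⁻¹ *ᵥ Δ')) →
      (∀ j, Δ (Sum.inr j) = Δbar) ∧
      (fun _ => (1 : ℝ)) ⬝ᵥ (S⁻¹ *ᵥ Δ) = Δbar) :=
  baseline_characterization_general v hv Δt
end

section
/- Let v ∈ R^N have positive entries, α ∈ R^N, and Σ* = diag(v) + α α^T. Fix 1 ≤ M < N and Δ_1,...,Δ_M. Let Δ̄ = (Σ_{i=1}^M α_i ν_i Δ_i)/(1 + Σ_{i=1}^M α_i^2 ν_i) with ν_i = 1/v_i. Then the minimizer Δ of Δ^T Σ*^{-1} Δ subject to fixed first M coordinates satisfies Δ_j = α_j Δ̄ for all j = M+1,...,N, and α^T Σ*^{-1} Δ = Δ̄. -/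
open Matrix

lemma quad_aux {a b : ℝ} (h : ∀ t : ℝ, 0 ≤ t * b + t ^ 2 * a) : b = 0 := by
  have ha : 0 ≤ a := by have h1 := h 1; have h2 := h (-1); nlinarith
  by_contra hb
  have hpos : (0:ℝ) < a + 1 := by linarith
  have hb2 : 0 < b ^ 2 := by positivity
  have h3 := h (-b / (a + 1))
  have h4 : 0 ≤ (-b / (a+1) * b + (-b / (a+1))^2 * a) * (a+1)^2 :=
    mul_nonneg h3 (by positivity)
  have h5 : (-b / (a+1) * b + (-b / (a+1))^2 * a) * (a+1)^2
      = -b^2 * (a+1) + b^2 * a := by field_simp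
  nlinarith [h4, h5]

/-- Proposition 1: for `Σ* = diag(v) + α αᵀ`, the minimizer of `Δᵀ Σ*⁻¹ Δ` with fixed first
`M` coordinates satisfies `Δ_j = α_j Δ̄` for unfamiliar sources, and `αᵀ Σ*⁻¹ Δ = Δ̄`, where
`Δ̄ = (Σ α_i ν_i Δ_i)/(1 + Σ α_i² ν_i)`. -/
theorem heterogeneous_loading_characterization {M L : ℕ} (hM : 0 < M) (hL : 0 < L)
    (v : Fin M ⊕ Fin L → ℝ) (hv : ∀ i, 0 < v i) (α : Fin M ⊕ Fin L → ℝ)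
    (Δt : Fin M → ℝ) :
    let S : Matrix (Fin M ⊕ Fin L) (Fin M ⊕ Fin L) ℝ :=
      Matrix.diagonal v + Matrix.vecMulVec α α
    let Δbar : ℝ :=
      (∑ i, α (Sum.inl i) * (v (Sum.inl i))⁻¹ * Δt i) /
        (1 + ∑ i, (α (Sum.inl i)) ^ 2 * (v (Sum.inl i))⁻¹)
    ∀ Δ : Fin M ⊕ Fin L → ℝ,
      (∀ i, Δ (Sum.inl i) = Δt i) →
      (∀ Δ' : Fin M ⊕ Fin L → ℝ, (∀ i, Δ' (Sum.inl i) = Δt i) →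
        Δ ⬝ᵥ (S⁻¹ *ᵥ Δ) ≤ Δ' ⬝ᵥ (S⁻¹ *ᵥ Δ')) →
      (∀ j, Δ (Sum.inr j) = α (Sum.inr j) * Δbar) ∧
      α ⬝ᵥ (S⁻¹ *ᵥ Δ) = Δbar := by
  intro S Δbar Δ hfeas hmin
  classical
  set ν : Fin M ⊕ Fin L → ℝ := fun i => (v i)⁻¹ with hν
  set u : Fin M ⊕ Fin L → ℝ := fun i => ν i * α i with hu
  have hν0 : ∀ i, 0 < ν i := fun i => inv_pos.2 (hv i)
  have hvν : ∀ i, v i * ν i = 1 := fun i => mul_inv_cancel₀ (hv i).ne'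
  set q : ℝ := ∑ i, α i ^ 2 * ν i with hqdef
  have hq0 : 0 ≤ q := Finset.sum_nonneg fun i _ => mul_nonneg (sq_nonneg _) (hν0 i).le
  have h1q : (0:ℝ) < 1 + q := by linarith
  set c : ℝ := (1 + q)⁻¹ with hc
  have hcq : c * (1 + q) = 1 := inv_mul_cancel₀ h1q.ne'
  set T : Matrix (Fin M ⊕ Fin L) (Fin M ⊕ Fin L) ℝ :=
    Matrix.diagonal ν - c • Matrix.vecMulVec u u with hT
  have hsum : (∑ j, α j * u j) = q := by
    rw [hqdef]; exact Finset.sum_congr rfl fun j _ => by simp only [hu]; ring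
  -- Sherman–Morrison: S * T = 1
  have h1 : Matrix.diagonal v * Matrix.diagonal ν = 1 := by
    rw [Matrix.diagonal_mul_diagonal]
    ext i k
    rcases eq_or_ne i k with rfl | h
    · simp [hvν]
    · simp [Matrix.diagonal_apply_ne _ h, Matrix.one_apply_ne h]
  have h2 : Matrix.diagonal v * Matrix.vecMulVec u u = Matrix.vecMulVec α u := by
    ext i k
    rw [Matrix.diagonal_mul, Matrix.vecMulVec_apply, Matrix.vecMulVec_apply]
    simp only [hu]
    linear_combination (α i * ((v k)⁻¹ * α k)) * hvν i
  have h3 : Matrix.vecMulVec α α * Matrix.diagonal ν = Matrix.vecMulVec α u := by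
    ext i k
    rw [Matrix.mul_diagonal, Matrix.vecMulVec_apply, Matrix.vecMulVec_apply]
    simp only [hu]; ring
  have h4 : Matrix.vecMulVec α α * Matrix.vecMulVec u u = q • Matrix.vecMulVec α u := by
    ext i k
    rw [Matrix.mul_apply, Matrix.smul_apply, Matrix.vecMulVec_apply, smul_eq_mul]
    calc ∑ j, Matrix.vecMulVec α α i j * Matrix.vecMulVec u u j k
        = ∑ j, (α j * u j) * (α i * u k) :=
          Finset.sum_congr rfl fun j _ => by
            rw [Matrix.vecMulVec_apply, Matrix.vecMulVec_apply]; ring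
      _ = (∑ j, α j * u j) * (α i * u k) := by rw [Finset.sum_mul]
      _ = q * (α i * u k) := by rw [hsum]
  have hST : S * T = 1 := by
    show (Matrix.diagonal v + Matrix.vecMulVec α α) * T = 1
    rw [hT, Matrix.mul_sub, Matrix.mul_smul, Matrix.add_mul, Matrix.add_mul, h1, h2, h3, h4]
    ext i k
    simp only [Matrix.add_apply, Matrix.sub_apply, Matrix.smul_apply, Matrix.vecMulVec_apply,
      smul_eq_mul, Matrix.one_apply]
    linear_combination (-(α i * u k)) * hcq
  have hSinv : S⁻¹ = T := Matrix.inv_eq_right_inv hST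
  rw [hSinv] at hmin ⊢
  set w : ℝ := ∑ j, u j * Δ j with hwdef
  have hTv : ∀ (x : Fin M ⊕ Fin L → ℝ) i,
      (T *ᵥ x) i = ν i * x i - c * (u i * (∑ j, u j * x j)) := by
    intro x i
    rw [hT, Matrix.sub_mulVec, Pi.sub_apply, Matrix.mulVec_diagonal,
      Matrix.smul_mulVec, Pi.smul_apply, smul_eq_mul]
    have hvv : (Matrix.vecMulVec u u *ᵥ x) i = u i * (∑ j, u j * x j) := by
      rw [Matrix.mulVec, dotProduct, Finset.mul_sum]
      exact Finset.sum_congr rfl fun j _ => by rw [Matrix.vecMulVec_apply]; ring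
    rw [hvv]
  have hTsym : Tᵀ = T := by
    rw [hT]
    ext i k
    rw [Matrix.transpose_apply]
    simp only [Matrix.sub_apply, Matrix.smul_apply, Matrix.vecMulVec_apply, smul_eq_mul,
      Matrix.diagonal_apply]
    rcases eq_or_ne i k with rfl | h
    · ring
    · simp only [if_neg h, if_neg (Ne.symm h)]; ring
  -- first order condition
  have hb0 : ∀ j : Fin L, (T *ᵥ Δ) (Sum.inr j) = 0 := by
    intro j
    set e : Fin M ⊕ Fin L → ℝ := Pi.single (Sum.inr j) 1 with he
    apply quad_aux (a := e ⬝ᵥ (T *ᵥ e)) (b := (T *ᵥ Δ) (Sum.inr j))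
    intro t
    have hfeas' : ∀ i, (Δ + (2 * t) • e) (Sum.inl i) = Δt i := by
      intro i
      have : e (Sum.inl i) = 0 :=
        Pi.single_eq_of_ne (show (Sum.inl i : Fin M ⊕ Fin L) ≠ Sum.inr j by simp) 1
      simp [this, hfeas i]
    have hle := hmin _ hfeas'
    have hcross : Δ ⬝ᵥ (T *ᵥ e) = e ⬝ᵥ (T *ᵥ Δ) := by
      rw [Matrix.dotProduct_mulVec, ← hTsym, Matrix.vecMul_transpose, hTsym]
      exact dotProduct_comm _ _
    have heb : e ⬝ᵥ (T *ᵥ Δ) = (T *ᵥ Δ) (Sum.inr j) := by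
      rw [he, single_dotProduct, one_mul]
    have hexp : (Δ + (2*t) • e) ⬝ᵥ (T *ᵥ (Δ + (2*t) • e)) =
        Δ ⬝ᵥ (T *ᵥ Δ) + (2*t) * (e ⬝ᵥ (T *ᵥ Δ)) + (2*t) * (Δ ⬝ᵥ (T *ᵥ e))
          + (2*t)^2 * (e ⬝ᵥ (T *ᵥ e)) := by
      simp only [Matrix.mulVec_add, Matrix.mulVec_smul, add_dotProduct, dotProduct_add,
        smul_dotProduct, dotProduct_smul, smul_eq_mul]
      ring
    rw [hexp, hcross, heb] at hle
    nlinarith [hle]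
  have hΔr : ∀ j : Fin L, Δ (Sum.inr j) = α (Sum.inr j) * (c * w) := by
    intro j
    have hb := hb0 j
    rw [hTv Δ (Sum.inr j), ← hwdef] at hb
    have hνr := (hν0 (Sum.inr j)).ne'
    apply mul_left_cancel₀ hνr
    simp only [hu] at hb ⊢
    linear_combination hb
  -- identify c * w with Δbar
  have hΔbar : Δbar = (∑ i, α (Sum.inl i) * (v (Sum.inl i))⁻¹ * Δt i) /
      (1 + ∑ i, (α (Sum.inl i)) ^ 2 * (v (Sum.inl i))⁻¹) := rfl
  set w₁ : ℝ := ∑ i, α (Sum.inl i) * (v (Sum.inl i))⁻¹ * Δt i with hw₁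
  set q₁ : ℝ := ∑ i, (α (Sum.inl i)) ^ 2 * (v (Sum.inl i))⁻¹ with hq₁
  set q₂ : ℝ := ∑ j, (α (Sum.inr j)) ^ 2 * ν (Sum.inr j) with hq₂
  have hq10 : 0 ≤ q₁ := by
    rw [hq₁]
    exact Finset.sum_nonneg fun i _ => mul_nonneg (sq_nonneg _) (inv_pos.2 (hv _)).le
  have h1q1 : (0:ℝ) < 1 + q₁ := by linarith
  have hqsplit : q = q₁ + q₂ := by
    rw [hqdef, Fintype.sum_sum_type, hq₁, hq₂]
  have hwq : w = w₁ + (c * w) * q₂ := by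
    conv_lhs => rw [hwdef]
    rw [Fintype.sum_sum_type, hw₁, hq₂, Finset.mul_sum]
    congr 1
    · refine Finset.sum_congr rfl fun i _ => ?_
      simp only [hu, hν, hfeas i]; ring
    · refine Finset.sum_congr rfl fun j _ => ?_
      rw [hΔr j]; simp only [hu, hν]; ring
  have hcw : c * w = Δbar := by
    rw [hΔbar, eq_div_iff h1q1.ne']
    linear_combination hwq + w * hcq - c * w * hqsplit
  refine ⟨fun j => by rw [hΔr j, hcw], ?_⟩
  have hfin : α ⬝ᵥ (T *ᵥ Δ) = w - c * (q * w) := by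
    show (∑ i, α i * (T *ᵥ Δ) i) = w - c * (q * w)
    calc ∑ i, α i * (T *ᵥ Δ) i
        = ∑ i, (u i * Δ i - c * (α i ^ 2 * ν i * w)) :=
          Finset.sum_congr rfl fun i _ => by
            rw [hTv Δ i, ← hwdef]; simp only [hu]; ring
      _ = (∑ i, u i * Δ i) - c * ((∑ i, α i ^ 2 * ν i) * w) := by
          rw [Finset.sum_sub_distrib]
          congr 1
          rw [← Finset.mul_sum, Finset.sum_mul]
      _ = w - c * (q * w) := by rw [← hwdef, ← hqdef]
  rw [hfin, ← hcw]
  linear_combination (-w) * hcq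
end

section
/- Let ν_1,...,ν_N > 0 and 1 ≤ M < N. Define the (N+1)×(N+1) matrix Φ = Γ^T Σ*^{-1} Γ, where Γ = [I_N | 1_N] and Σ* = diag(1/ν_1,...,1/ν_N) + 1_N 1_N^T. Then the minimizer of Δ^T Φ Δ over Δ ∈ R^{N+1} with first M coordinates fixed at Δ_1,...,Δ_M satisfies Δ_j = Δ̄ for j = M+1,...,N and Δ_{N+1} = −Δ̄, where Δ̄ = (Σ_{i=1}^M ν_i Δ_i)/(Σ_{i=1}^M ν_i). -/
open Matrix Finset

/-!
With `x = ΓΔ`, i.e. `x_k = Δ_k + Δ_{N+1}`, the objective is the positive definite form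
`xᵀ Σ*⁻¹ x`. The candidate with `Δ_j = Δ̄` for the free `j` and `Δ_{N+1} = -Δ̄` has signal
`x°_i = Δ_i - Δ̄` for `i ≤ M` and `x°_i = 0` otherwise, and `Σ*⁻¹ x° = ν ⊙ x°` because
`∑ ν_i x°_i = 0`. For any feasible `Δ`, `ΓΔ - x°` is constant on the fixed coordinates, which
carry all of `ν ⊙ x°`, so it is `Σ*⁻¹`-orthogonal to `x°`. By Pythagoras every minimizer has
`ΓΔ = x°`, and the coordinates of `Δ` can be read off.
-/

theorem Matrix.PosDef.eq_of_dotProduct_mulVec_le {n : Type*} [Fintype n] {A : Matrix n n ℝ}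
    (hA : A.PosDef) {x y : n → ℝ} (horth : (x - y) ⬝ᵥ (A *ᵥ y) = 0)
    (hle : x ⬝ᵥ (A *ᵥ x) ≤ y ⬝ᵥ (A *ᵥ y)) : x = y := by
  set d := x - y
  have hsymm : y ⬝ᵥ (A *ᵥ d) = d ⬝ᵥ (A *ᵥ y) := by
    rw [← dotProduct_transpose_mulVec, (isHermitian_iff_isSymm.1 hA.isHermitian).eq]
  have hpythagoras : x ⬝ᵥ (A *ᵥ x) = y ⬝ᵥ (A *ᵥ y) + d ⬝ᵥ (A *ᵥ d) := by
    rw [show x = y + d by simp [d], mulVec_add, dotProduct_add, add_dotProduct, add_dotProduct,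
      hsymm, horth]
    ring
  by_contra hne
  have hpos := hA.dotProduct_mulVec_pos (sub_ne_zero.2 hne)
  rw [star_trivial] at hpos
  linarith

theorem Matrix.dotProduct_transpose_mul_mul_mulVec {R m n : Type*} [CommSemiring R] [Fintype m]
    [Fintype n] (B : Matrix m n R) (A : Matrix m m R) (v : n → R) :
    v ⬝ᵥ ((Bᵀ * A * B) *ᵥ v) = (B *ᵥ v) ⬝ᵥ (A *ᵥ (B *ᵥ v)) := by
  rw [← mulVec_mulVec, ← mulVec_mulVec, dotProduct_transpose_mulVec, dotProduct_comm]

theorem Finset.sum_mul_sub_weighted_mean {ι : Type*} {s : Finset ι} {w f : ι → ℝ}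
    (hw : ∑ i ∈ s, w i ≠ 0) :
    ∑ i ∈ s, w i * (f i - (∑ j ∈ s, w j * f j) / ∑ j ∈ s, w j) = 0 := by
  simp only [mul_sub, sum_sub_distrib, ← sum_mul, mul_div_cancel₀ _ hw, sub_self]

section LatentCovariance

variable {ι : Type*} [Fintype ι] [DecidableEq ι] {ν : ι → ℝ}

theorem posDef_diagonal_inv_add_ones (hν : ∀ i, 0 < ν i) :
    (diagonal (fun i => (ν i)⁻¹) + of fun _ _ => (1 : ℝ)).PosDef := by
  refine (PosDef.diagonal fun i => inv_pos.2 (hν i)).add_posSemidef ?_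
  convert posSemidef_vecMulVec_self_star (1 : ι → ℝ)
  ext
  simp [vecMulVec]

theorem inv_diagonal_inv_add_ones_mulVec (hν : ∀ i, 0 < ν i) {x : ι → ℝ}
    (hx : ∑ i, ν i * x i = 0) :
    (diagonal (fun i => (ν i)⁻¹) + of fun _ _ => (1 : ℝ))⁻¹ *ᵥ x = fun i => ν i * x i := by
  let := (posDef_diagonal_inv_add_ones hν).isUnit.invertible
  have hones : (of fun _ _ => 1 : Matrix ι ι ℝ) *ᵥ (fun i => ν i * x i) = 0 := by
    ext
    simp [mulVec, dotProduct, hx]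
  refine inv_mulVec_eq_vec (funext fun i => ?_)
  rw [add_mulVec, hones, add_zero, mulVec_diagonal, inv_mul_cancel_left₀ (hν i).ne']

theorem dotProduct_inv_diagonal_inv_add_ones_mulVec_eq_zero (hν : ∀ i, 0 < ν i) {x y : ι → ℝ}
    (hx : ∑ i, ν i * x i = 0) (c : ℝ) (hy : ∀ i, x i ≠ 0 → y i = c) :
    y ⬝ᵥ ((diagonal (fun i => (ν i)⁻¹) + of fun _ _ => (1 : ℝ))⁻¹ *ᵥ x) = 0 := by
  have hconst (i : ι) : y i * (ν i * x i) = c * (ν i * x i) := by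
    by_cases hxi : x i = 0
    · simp [hxi]
    · rw [hy i hxi]
  simp only [inv_diagonal_inv_add_ones_mulVec hν hx, dotProduct, hconst, ← mul_sum, hx,
    mul_zero]

end LatentCovariance

/-- Proposition 2 (latent factor model): with `Γ = [I_N | 1_N]`,
`Σ* = diag(1/ν) + 1 1ᵀ` and `Φ = Γᵀ Σ*⁻¹ Γ`, any minimizer of `Δᵀ Φ Δ` over
`Δ ∈ ℝ^{N+1}` with the first `M` coordinates fixed satisfies `Δ_j = Δ̄` for
`j = M+1, …, N` and `Δ_{N+1} = −Δ̄`, where `Δ̄ = (Σ_{i<M} ν_i Δ_i)/(Σ_{i<M} ν_i)`. -/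
theorem latent_factor_characterization {N M : ℕ} (hM : 1 ≤ M) (hMN : M < N)
    (ν : Fin N → ℝ) (hν : ∀ i, 0 < ν i) (Δt : Fin N → ℝ) :
    let S : Matrix (Fin N) (Fin N) ℝ :=
      Matrix.diagonal (fun i => (ν i)⁻¹) + Matrix.of (fun _ _ => (1 : ℝ))
    let Γ : Matrix (Fin N) (Fin N ⊕ Unit) ℝ :=
      Matrix.of fun i j =>
        Sum.elim (fun k => if i = k then (1 : ℝ) else 0) (fun _ => (1 : ℝ)) j
    let Φ : Matrix (Fin N ⊕ Unit) (Fin N ⊕ Unit) ℝ := Γᵀ * S⁻¹ * Γ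
    let Δbar : ℝ :=
      (∑ i ∈ Finset.univ.filter (fun i : Fin N => (i : ℕ) < M), ν i * Δt i) /
        (∑ i ∈ Finset.univ.filter (fun i : Fin N => (i : ℕ) < M), ν i)
    ∀ Δ : Fin N ⊕ Unit → ℝ,
      (∀ i : Fin N, (i : ℕ) < M → Δ (Sum.inl i) = Δt i) →
      (∀ Δ' : Fin N ⊕ Unit → ℝ, (∀ i : Fin N, (i : ℕ) < M → Δ' (Sum.inl i) = Δt i) →
        Δ ⬝ᵥ (Φ *ᵥ Δ) ≤ Δ' ⬝ᵥ (Φ *ᵥ Δ')) →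
      (∀ j : Fin N, M ≤ (j : ℕ) → Δ (Sum.inl j) = Δbar) ∧
      Δ (Sum.inr ()) = -Δbar := by
  intro S Γ Φ Δbar Δ hfix hmin
  let i₀ : Fin N := ⟨0, by omega⟩
  have hi₀ : (i₀ : ℕ) < M := hM
  have hΓ (v : Fin N ⊕ Unit → ℝ) (k : Fin N) : (Γ *ᵥ v) k = v (.inl k) + v (.inr ()) := by
    simp [Γ, mulVec, dotProduct, Fintype.sum_sum_type]
  set xopt : Fin N → ℝ := fun k => if (k : ℕ) < M then Δt k - Δbar else 0
  have hcentred : ∑ k, ν k * xopt k = 0 := by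
    simpa [xopt, mul_ite, sum_ite] using sum_mul_sub_weighted_mean (f := Δt)
      (sum_pos (fun i _ => hν i) ⟨i₀, by simpa using hi₀⟩).ne'
  let Δopt : Fin N ⊕ Unit → ℝ :=
    Sum.elim (fun i => if (i : ℕ) < M then Δt i else Δbar) (fun _ => -Δbar)
  have hΓopt : Γ *ᵥ Δopt = xopt := by
    ext k
    by_cases hk : (k : ℕ) < M <;> simp [hΓ, Δopt, xopt, hk, sub_eq_add_neg]
  have hsignal : Γ *ᵥ Δ = xopt := by
    refine (posDef_diagonal_inv_add_ones hν).inv.eq_of_dotProduct_mulVec_le ?_ ?_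
    · refine dotProduct_inv_diagonal_inv_add_ones_mulVec_eq_zero hν hcentred
        (Δ (.inr ()) + Δbar) fun k hk => ?_
      have hkM : (k : ℕ) < M := by
        by_contra h
        simp [xopt, h] at hk
      simp [hΓ, xopt, hkM, hfix]
    · have hle := hmin Δopt fun i hi => by simp [Δopt, hi]
      rwa [dotProduct_transpose_mul_mul_mulVec, dotProduct_transpose_mul_mul_mulVec, hΓopt]
        at hle
  have hcoord (k : Fin N) : Δ (.inl k) + Δ (.inr ()) = xopt k := by rw [← hΓ, hsignal]
  have hlatent : Δ (.inr ()) = -Δbar := by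
    have h := hcoord i₀
    simp only [xopt, hi₀, if_true, hfix i₀ hi₀] at h
    linarith
  refine ⟨fun j hj => ?_, hlatent⟩
  have h := hcoord j
  simp only [xopt, not_lt.2 hj, if_false, hlatent] at h
  linarith
end

section
/- Let Ω_0, Ω_1, ..., Ω_M be K×K symmetric positive definite matrices and A = diag(Ω_1,...,Ω_M) + (1_M ⊗ I_K) Ω_0 (1_M^T ⊗ I_K) (an MK×MK matrix). Then A is invertible and A^{-1} = diag(Ω_1^{-1},...,Ω_M^{-1}) − [Ω_1^{-1};...;Ω_M^{-1}] (Σ_{i=0}^M Ω_i^{-1})^{-1} [Ω_1^{-1},...,Ω_M^{-1}]. -/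
open Matrix

/-- Woodbury formula for the block covariance matrix
`A = diag(Ω_1, …, Ω_M) + (1_M ⊗ I_K) Ω_0 (1_Mᵀ ⊗ I_K)`:
`A⁻¹ = diag(Ω_i⁻¹) − [Ω_i⁻¹] (Σ_{i=0}^M Ω_i⁻¹)⁻¹ [Ω_j⁻¹]`. -/
theorem woodbury_block_inverse {K M : ℕ} (Ω0 : Matrix (Fin K) (Fin K) ℝ)
    (Ω : Fin M → Matrix (Fin K) (Fin K) ℝ) (h0 : Ω0.PosDef) (h : ∀ i, (Ω i).PosDef) :
    let A : Matrix (Fin K × Fin M) (Fin K × Fin M) ℝ :=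
      Matrix.blockDiagonal Ω + Matrix.of (fun p q => Ω0 p.1 q.1)
    IsUnit A.det ∧
    A⁻¹ =
      Matrix.blockDiagonal (fun i => (Ω i)⁻¹) -
        Matrix.of (fun p q =>
          ((Ω p.2)⁻¹ * (Ω0⁻¹ + ∑ i, (Ω i)⁻¹)⁻¹ * (Ω q.2)⁻¹) p.1 q.1) := by
  intro A
  classical
  set S : Matrix (Fin K) (Fin K) ℝ := Ω0⁻¹ + ∑ i, (Ω i)⁻¹ with hSdef
  have hSum : (∑ i, (Ω i)⁻¹).PosSemidef := by
    refine Finset.sum_induction _ _ (fun a b ha hb => ha.add hb) Matrix.PosSemidef.zero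
      (fun i _ => (h i).inv.posSemidef)
  have hSpd : S.PosDef := h0.inv.add_posSemidef hSum
  have hSdet : IsUnit S.det := hSpd.det_pos.ne'.isUnit
  have h0det : IsUnit Ω0.det := h0.det_pos.ne'.isUnit
  set D' : Matrix (Fin K × Fin M) (Fin K × Fin M) ℝ :=
    Matrix.blockDiagonal (fun i => (Ω i)⁻¹) with hD'def
  set U : Matrix (Fin K × Fin M) (Fin K) ℝ :=
    Matrix.of (fun p k => if p.1 = k then (1 : ℝ) else 0) with hUdef
  have hA : A = Matrix.blockDiagonal Ω + U * Ω0 * Uᵀ := by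
    show Matrix.blockDiagonal Ω + _ = _
    congr 1
    ext ⟨i, m⟩ ⟨j, n⟩
    simp [hUdef, Matrix.mul_apply, Finset.sum_mul, ite_mul]
  have hDD' : Matrix.blockDiagonal Ω * D' = 1 := by
    rw [hD'def, ← Matrix.blockDiagonal_mul]
    rw [show (fun k => Ω k * (Ω k)⁻¹) = fun _ => (1 : Matrix (Fin K) (Fin K) ℝ) from
      funext fun k => Matrix.mul_nonsing_inv _ (h k).det_pos.ne'.isUnit]
    exact Matrix.blockDiagonal_one
  have hV : D' * U = Matrix.of (fun p k => (Ω p.2)⁻¹ p.1 k) := by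
    ext ⟨i, m⟩ k
    simp [hUdef, hD'def, Matrix.mul_apply, Matrix.blockDiagonal_apply, Fintype.sum_prod_type]
  have hW : Uᵀ * D' = Matrix.of (fun k q => (Ω q.2)⁻¹ k q.1) := by
    ext k ⟨j, n⟩
    simp [hUdef, hD'def, Matrix.mul_apply, Matrix.blockDiagonal_apply, Fintype.sum_prod_type]
  have hUDU : Uᵀ * D' * U = S - Ω0⁻¹ := by
    rw [hW]
    ext k j
    simp [hUdef, hSdef, Matrix.mul_apply, Fintype.sum_prod_type, Matrix.sum_apply,
      Finset.sum_comm (γ := Fin K)]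
  have hO : Ω0 * (S - Ω0⁻¹) * S⁻¹ = Ω0 - S⁻¹ := by
    rw [Matrix.mul_sub, Matrix.sub_mul, Matrix.mul_nonsing_inv _ h0det,
      Matrix.mul_assoc, Matrix.mul_nonsing_inv _ hSdet, Matrix.mul_one, Matrix.one_mul]
  have key : A * (D' - (D' * U) * S⁻¹ * (Uᵀ * D')) = 1 := by
    have h1 : ∀ X : Matrix (Fin K × Fin M) (Fin K × Fin M) ℝ,
        Matrix.blockDiagonal Ω * (D' * X) = X := fun X => by
      rw [← Matrix.mul_assoc, hDD', Matrix.one_mul]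
    have h2 : ∀ Y : Matrix (Fin K) (Fin K × Fin M) ℝ,
        Uᵀ * (D' * (U * Y)) = (S - Ω0⁻¹) * Y := fun Y => by
      rw [← Matrix.mul_assoc, ← Matrix.mul_assoc, hUDU]
    have h3 : Ω0 * ((S - Ω0⁻¹) * (S⁻¹ * (Uᵀ * D'))) = Ω0 * (Uᵀ * D') - S⁻¹ * (Uᵀ * D') := by
      rw [← Matrix.mul_assoc, ← Matrix.mul_assoc, hO, Matrix.sub_mul]
    rw [hA]
    simp only [Matrix.add_mul, Matrix.mul_sub, Matrix.mul_assoc, hDD', h1, h2, h3]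
    abel
  have hB : (Matrix.of (fun p q =>
        ((Ω p.2)⁻¹ * S⁻¹ * (Ω q.2)⁻¹) p.1 q.1) :
        Matrix (Fin K × Fin M) (Fin K × Fin M) ℝ) = (D' * U) * S⁻¹ * (Uᵀ * D') := by
    rw [hV, hW]
    ext ⟨i, m⟩ ⟨j, n⟩
    simp only [Matrix.mul_apply, Matrix.of_apply]
  have key' : A * (D' - Matrix.of (fun p q =>
      ((Ω p.2)⁻¹ * S⁻¹ * (Ω q.2)⁻¹) p.1 q.1)) = 1 := by
    rw [hB]; exact key
  exact ⟨Matrix.isUnit_det_of_right_inverse key', Matrix.inv_eq_right_inv key'⟩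
end
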